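/- Let N = (2q₁+1)(2q₂+1) be a safe semiprime with q₁, q₂ distinct primes greater than 2. Then exactly 2·q₁·q₂ of the 4·q₁·q₂ units a modulo N satisfy: the order r of a is even and a^{r/2} is not congruent to −1 modulo N (i.e., Shor's classical post-processing succeeds for exactly half of all units). -/

import Mathlib

/-!
By the Chinese remainder theorem `(ZMod N)ˣ ≃* (ZMod p₁)ˣ × (ZMod p₂)ˣ`, a product of cyclic
groups of orders `2 q₁` and `2 q₂`. The order `r` of `a = (x, y)` divides `2 q₁ q₂`, so when `r`
is even, `r / 2` is odd; then `x ^ (r / 2) = ±1`, with `-1` exactly when `x` has even order, and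
likewise for `y`. Hence `a ^ (r / 2) ≠ -1` with `r` even iff exactly one of `x`, `y` has even
order. Each factor has `q_i` elements of odd and `q_i` of even order, giving `2 q₁ q₂`.
-/

def ShorSucceeds {M : Type*} [Monoid M] [Neg M] (a : M) : Prop :=
  Even (orderOf a) ∧ a ^ (orderOf a / 2) ≠ -1

theorem MulEquiv.shorSucceeds_apply_iff {M N : Type*} [Monoid M] [Neg M] [Monoid N] [Neg N]
    (f : M ≃* N) (hf : f (-1) = -1) (a : M) : ShorSucceeds (f a) ↔ ShorSucceeds a := by
  rw [ShorSucceeds, ShorSucceeds, f.orderOf_eq, ← map_pow, ← hf, f.injective.ne_iff]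

def ZMod.unitsChineseRemainder {m n : ℕ} (h : m.Coprime n) :
    (ZMod (m * n))ˣ ≃* (ZMod m)ˣ × (ZMod n)ˣ :=
  (Units.mapEquiv (ZMod.chineseRemainder h).toMulEquiv).trans MulEquiv.prodUnits

theorem ZMod.unitsChineseRemainder_neg_one {m n : ℕ} (h : m.Coprime n) :
    ZMod.unitsChineseRemainder h (-1) = -1 := by
  ext <;> simp [ZMod.unitsChineseRemainder, MulEquiv.prodUnits]

theorem ZMod.card_units_two_mul_add_one {q : ℕ} (hp : (2 * q + 1).Prime) :
    Nat.card (ZMod (2 * q + 1))ˣ = 2 * q := by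
  have := Fact.mk hp
  rw [Nat.card_eq_fintype_card, ZMod.card_units, Nat.add_sub_cancel]

theorem Units.pow_eq_neg_one_iff_even_orderOf {R : Type*} [CommRing R] [IsDomain R]
    (hR : ringChar R ≠ 2) {x : Rˣ} {k : ℕ} (hk : Odd k) (hx : orderOf x ∣ 2 * k) :
    x ^ k = -1 ↔ Even (orderOf x) := by
  have hneg : (-1 : Rˣ) ≠ 1 := fun h =>
    Ring.neg_one_ne_one_of_char_ne_two hR (congrArg Units.val h)
  have hsq : ((x ^ k : Rˣ) : R) * ((x ^ k : Rˣ) : R) = 1 := by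
    rw [← Units.val_mul, ← pow_add, ← two_mul, orderOf_dvd_iff_pow_eq_one.mp hx, Units.val_one]
  have hone : x ^ k = 1 ↔ ¬Even (orderOf x) := by
    rw [← orderOf_dvd_iff_pow_eq_one, Nat.not_even_iff_odd]
    exact ⟨hk.of_dvd_nat, fun h => h.coprime_two_right.dvd_of_dvd_mul_left hx⟩
  rcases mul_self_eq_one_iff.mp hsq with h | h
  · have h1 : x ^ k = 1 := Units.ext h
    simp only [h1, hone.mp h1, hneg.symm]
  · have h1 : x ^ k = -1 := Units.ext (by simpa using h)
    have := hone.not.mp (h1 ▸ hneg)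
    simp only [h1, not_not.mp this]

theorem Units.shorSucceeds_prod_iff {R S : Type*} [CommRing R] [IsDomain R] [CommRing S]
    [IsDomain S] (hR : ringChar R ≠ 2) (hS : ringChar S ≠ 2) (b : Rˣ × Sˣ)
    (h4 : ¬4 ∣ orderOf b) : ShorSucceeds b ↔ Xor (Even (orderOf b.1)) (Even (orderOf b.2)) := by
  have hdvd₁ : orderOf b.1 ∣ orderOf b := Prod.orderOf b ▸ Nat.dvd_lcm_left _ _
  have hdvd₂ : orderOf b.2 ∣ orderOf b := Prod.orderOf b ▸ Nat.dvd_lcm_right _ _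
  have heven : Even (orderOf b) ↔ Even (orderOf b.1) ∨ Even (orderOf b.2) :=
    ⟨fun h => Nat.even_mul.mp <| even_iff_two_dvd.2 <|
        h.two_dvd.trans (Prod.orderOf b ▸ Nat.lcm_dvd_mul _ _),
      fun h => even_iff_two_dvd.2 <| h.elim (·.two_dvd.trans hdvd₁) (·.two_dvd.trans hdvd₂)⟩
  rw [xor_iff_or_and_not_and, ← heven, ShorSucceeds]
  refine and_congr_right fun ⟨k, hk⟩ => ?_
  have hkodd : Odd k := Nat.not_even_iff_odd.mp fun ⟨j, hj⟩ => h4 ⟨j, by omega⟩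
  have hdvd : orderOf b ∣ 2 * k := ⟨1, by omega⟩
  rw [show orderOf b / 2 = k by omega, Ne, Prod.ext_iff, Prod.pow_fst, Prod.pow_snd,
    Prod.fst_neg, Prod.snd_neg, Prod.fst_one, Prod.snd_one,
    Units.pow_eq_neg_one_iff_even_orderOf hR hkodd (hdvd₁.trans hdvd),
    Units.pow_eq_neg_one_iff_even_orderOf hS hkodd (hdvd₂.trans hdvd)]

theorem Prod.not_four_dvd_orderOf {G H : Type*} [Group G] [Group H] [Finite G] [Finite H]
    {m n : ℕ} (hG : Nat.card G = 2 * m) (hH : Nat.card H = 2 * n) (hm : Odd m) (hn : Odd n)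
    (b : G × H) : ¬4 ∣ orderOf b := by
  have h₁ : orderOf b.1 ∣ 2 * m * n := (hG ▸ orderOf_dvd_natCard b.1).trans ⟨n, rfl⟩
  have h₂ : orderOf b.2 ∣ 2 * m * n := (hH ▸ orderOf_dvd_natCard b.2).trans ⟨m, by ring⟩
  obtain ⟨c, hc⟩ := hm.mul hn
  intro h4
  have h := h4.trans (Prod.orderOf b ▸ Nat.lcm_dvd h₁ h₂)
  rw [mul_assoc, hc] at h
  omega

theorem Nat.card_subtype_add_card_subtype_not {α : Type*} [Finite α] (p : α → Prop) :
    Nat.card {a // p a} + Nat.card {a // ¬p a} = Nat.card α := by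
  classical
  rw [← Nat.card_sum, Nat.card_congr (Equiv.sumCompl p)]

theorem Nat.card_subtype_xor {α β : Type*} [Finite α] [Finite β] (p : α → Prop) (q : β → Prop) :
    Nat.card {x : α × β // Xor (p x.1) (q x.2)} =
      Nat.card {a // p a} * Nat.card {b // ¬q b} + Nat.card {a // ¬p a} * Nat.card {b // q b} := by
  classical
  have hdisj : Disjoint (fun x : α × β => p x.1 ∧ ¬q x.2) (fun x => q x.2 ∧ ¬p x.1) := by
    rw [disjoint_iff_inf_le]
    rintro x ⟨⟨hp, -⟩, -, hnp⟩
    exact hnp hp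
  have hswap : {x : α × β // q x.2 ∧ ¬p x.1} ≃ {a // ¬p a} × {b // q b} :=
    (Equiv.subtypeEquivRight fun _ => and_comm).trans
      (Equiv.subtypeProdEquivProd (p := fun a => ¬p a) (q := q))
  refine (Nat.card_congr (subtypeOrEquiv _ _ hdisj)).trans ?_
  rw [Nat.card_sum, Nat.card_congr (Equiv.subtypeProdEquivProd (p := p) (q := fun b => ¬q b)),
    Nat.card_congr hswap, Nat.card_prod, Nat.card_prod]

theorem odd_orderOf_iff_pow_eq_one {G : Type*} [Group G] [Finite G] {m : ℕ}
    (hG : Nat.card G = 2 * m) (hm : Odd m) (x : G) : Odd (orderOf x) ↔ x ^ m = 1 := by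
  rw [← orderOf_dvd_iff_pow_eq_one]
  refine ⟨fun hx => hx.coprime_two_right.dvd_of_dvd_mul_left ?_, fun hx => hm.of_dvd_nat hx⟩
  exact hG ▸ orderOf_dvd_natCard x

section Cyclic

variable {G : Type*} [CommGroup G] [IsCyclic G] [Finite G] {m : ℕ}

theorem IsCyclic.card_odd_orderOf (hG : Nat.card G = 2 * m) (hm : Odd m) :
    Nat.card {x : G // ¬Even (orderOf x)} = m := by
  have e : {x : G // ¬Even (orderOf x)} ≃ (powMonoidHom m : G →* G).ker :=
    Equiv.subtypeEquivRight fun x => by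
      rw [Nat.not_even_iff_odd, odd_orderOf_iff_pow_eq_one hG hm, MonoidHom.mem_ker,
        powMonoidHom_apply]
  rw [Nat.card_congr e, IsCyclic.card_powMonoidHom_ker, hG, Nat.gcd_mul_left_left]

theorem IsCyclic.card_even_orderOf (hG : Nat.card G = 2 * m) (hm : Odd m) :
    Nat.card {x : G // Even (orderOf x)} = m := by
  have := Nat.card_subtype_add_card_subtype_not (fun x : G => Even (orderOf x))
  rw [IsCyclic.card_odd_orderOf hG hm, hG] at this
  omega

end Cyclic

theorem shor_success_count_mod_safe_semiprime
    (q₁ q₂ N : ℕ) (hq₁ : q₁.Prime) (hq₂ : q₂.Prime)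
    (hp₁ : (2 * q₁ + 1).Prime) (hp₂ : (2 * q₂ + 1).Prime)
    (hne : q₁ ≠ q₂) (hq₁2 : 2 < q₁) (hq₂2 : 2 < q₂)
    (hN : N = (2 * q₁ + 1) * (2 * q₂ + 1)) :
    Nat.card {a : (ZMod N)ˣ // Even (orderOf a) ∧ a ^ (orderOf a / 2) ≠ -1}
      = 2 * q₁ * q₂ := by
  subst hN
  have := Fact.mk hp₁
  have := Fact.mk hp₂
  have hcop : (2 * q₁ + 1).Coprime (2 * q₂ + 1) := (Nat.coprime_primes hp₁ hp₂).mpr (by omega)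
  have hchar (q : ℕ) : ringChar (ZMod (2 * q + 1)) ≠ 2 := by rw [ZMod.ringChar_zmod_n]; omega
  have hodd₁ : Odd q₁ := hq₁.odd_of_ne_two (by omega)
  have hodd₂ : Odd q₂ := hq₂.odd_of_ne_two (by omega)
  have hcard₁ := ZMod.card_units_two_mul_add_one hp₁
  have hcard₂ := ZMod.card_units_two_mul_add_one hp₂
  calc Nat.card {a : (ZMod ((2 * q₁ + 1) * (2 * q₂ + 1)))ˣ // ShorSucceeds a}
      = Nat.card {b : (ZMod (2 * q₁ + 1))ˣ × (ZMod (2 * q₂ + 1))ˣ // ShorSucceeds b} :=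
        Nat.card_congr <| .subtypeEquiv (ZMod.unitsChineseRemainder hcop).toEquiv fun a =>
          (MulEquiv.shorSucceeds_apply_iff _ (ZMod.unitsChineseRemainder_neg_one hcop) a).symm
    _ = Nat.card {b : (ZMod (2 * q₁ + 1))ˣ × (ZMod (2 * q₂ + 1))ˣ //
          Xor (Even (orderOf b.1)) (Even (orderOf b.2))} :=
        Nat.card_congr <| .subtypeEquivRight fun b => Units.shorSucceeds_prod_iff (hchar _)
          (hchar _) b (Prod.not_four_dvd_orderOf hcard₁ hcard₂ hodd₁ hodd₂ b)
    _ = 2 * q₁ * q₂ := by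
        rw [Nat.card_subtype_xor (fun x => Even (orderOf x)) (fun y => Even (orderOf y)),
          IsCyclic.card_even_orderOf hcard₁ hodd₁, IsCyclic.card_odd_orderOf hcard₁ hodd₁,
          IsCyclic.card_even_orderOf hcard₂ hodd₂, IsCyclic.card_odd_orderOf hcard₂ hodd₂]
        ring
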